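/- arXiv:1308.0776 — 3 statements merged into one kernel-verified Lean document; each statement's English description precedes it below -/
import Mathlib

section
/- Let G be a finite simple graph, (u,v) an edge of G, and let G' be G with the edge (u,v) deleted. Let c be a vertex and r a natural number. If the connected component of c in G has size at least r but the connected component of c in G' has size strictly less than r, then dist_G(c,u) ≤ r and dist_G(c,v) ≤ r. -/
open SimpleGraph

private lemma walk_prefix {V : Type*} {G : SimpleGraph V} :
    ∀ {c w : V} (p : G.Walk c w) (k : ℕ), k ≤ p.length →
      ∃ q : G.Walk c (p.getVert k), q.length = k ∧ ∀ i ≤ k, q.getVert i = p.getVert i := by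
  intro c w p
  induction p with
  | nil =>
    intro k hk
    simp only [SimpleGraph.Walk.length_nil, Nat.le_zero] at hk
    subst hk
    exact ⟨.nil, rfl, fun i hi => by simp⟩
  | @cons a b w h p ih =>
    intro k hk
    cases k with
    | zero =>
      refine ⟨(Walk.nil).copy rfl ((Walk.cons h p).getVert_zero).symm, by simp, ?_⟩
      intro i hi
      interval_cases i
      simp
    | succ n =>
      simp only [Walk.length_cons, Nat.succ_le_succ_iff] at hk
      obtain ⟨q, hq1, hq2⟩ := ih n hk
      refine ⟨(q.cons h).copy rfl rfl, by simp [hq1], ?_⟩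
      intro i hi
      cases i with
      | zero => simp
      | succ j =>
        simp only [Walk.copy_rfl_rfl, Walk.getVert_cons_succ]
        exact hq2 j (Nat.succ_le_succ_iff.mp hi)

private lemma walk_suffix {V : Type*} {G : SimpleGraph V} :
    ∀ {c w : V} (p : G.Walk c w) (k : ℕ), k ≤ p.length →
      ∃ q : G.Walk (p.getVert k) w, q.length = p.length - k := by
  intro c w p
  induction p with
  | nil =>
    intro k hk
    simp only [SimpleGraph.Walk.length_nil, Nat.le_zero] at hk
    subst hk
    exact ⟨.nil, rfl⟩
  | @cons a b w h p ih =>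
    intro k hk
    cases k with
    | zero => exact ⟨((Walk.cons h p).copy ((Walk.cons h p).getVert_zero).symm rfl), by simp⟩
    | succ n =>
      simp only [Walk.length_cons, Nat.succ_le_succ_iff] at hk
      obtain ⟨q, hq⟩ := ih n hk
      exact ⟨q, by simpa using hq⟩

private lemma key_lemma {V : Type*} [Fintype V] (G : SimpleGraph V) (u v : V) (huv : G.Adj u v)
    (c : V) (r : ℕ)
    (hafter : {y : V | (G.deleteEdges {s(u, v)}).Reachable c y}.ncard < r) :
    G.dist c u ≤ r := by
  classical
  by_contra hdist
  push_neg at hdist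
  -- c is reachable from u, get a shortest walk p
  have hreach : G.Reachable c u := by
    by_contra hnr
    rw [SimpleGraph.dist_eq_zero_of_not_reachable hnr] at hdist
    omega
  obtain ⟨p, hp, hplen⟩ := hreach.exists_path_of_dist
  -- prefix walks
  have hpre : ∀ k ≤ r, ∃ q : G.Walk c (p.getVert k), q.length = k ∧
      ∀ i ≤ k, q.getVert i = p.getVert i :=
    fun k hk => walk_prefix p k (by omega)
  -- u does not appear among the first r+1 vertices of p
  have hu : ∀ i ≤ r, p.getVert i ≠ u := by
    intro i hi hiu
    obtain ⟨q, hq1, _⟩ := hpre i hi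
    have h := SimpleGraph.dist_le q
    rw [hq1, hiu] at h
    omega
  -- distance to the k-th vertex is exactly k
  have hdk : ∀ k ≤ r, G.dist c (p.getVert k) = k := by
    intro k hk
    obtain ⟨q, hq1, _⟩ := hpre k hk
    have h1 := SimpleGraph.dist_le q
    rw [hq1] at h1
    obtain ⟨q', hq'⟩ := walk_suffix p k (by omega)
    obtain ⟨w1, _, hw1len⟩ := q.reachable.exists_path_of_dist
    have h3 := SimpleGraph.dist_le (w1.append q')
    rw [Walk.length_append, hq', hw1len] at h3
    omega
  -- each of the first r+1 vertices is reachable in the deleted graph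
  have hmem : ∀ k ≤ r, (G.deleteEdges {s(u, v)}).Reachable c (p.getVert k) := by
    intro k hk
    obtain ⟨q, hq1, hq2⟩ := hpre k hk
    refine (q.toDeleteEdges {s(u, v)} ?_).reachable
    intro e he hes
    rw [Set.mem_singleton_iff] at hes
    subst hes
    have husup : u ∈ q.support := q.fst_mem_support_of_mem_edges he
    rw [Walk.mem_support_iff_exists_getVert] at husup
    obtain ⟨i, hiu, hile⟩ := husup
    rw [hq1] at hile
    rw [hq2 i hile] at hiu
    exact hu i (le_trans hile hk) hiu
  -- so the reachable set has at least r+1 elements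
  have hsub : ↑((Finset.range (r + 1)).image p.getVert) ⊆
      {y : V | (G.deleteEdges {s(u, v)}).Reachable c y} := by
    intro y hy
    simp only [Finset.coe_image, Finset.coe_range, Set.mem_image, Set.mem_Iio] at hy
    obtain ⟨k, hk, rfl⟩ := hy
    exact hmem k (by omega)
  have hinj : Set.InjOn p.getVert ↑(Finset.range (r + 1)) := by
    intro a ha b hb hab
    simp only [Finset.coe_range, Set.mem_Iio] at ha hb
    have := hdk a (by omega)
    have := hdk b (by omega)
    rw [hab] at *
    omega
  have hcard : ((Finset.range (r + 1)).image p.getVert).card = r + 1 := by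
    rw [Finset.card_image_of_injOn hinj, Finset.card_range]
  have := Set.ncard_le_ncard hsub (Set.toFinite _)
  rw [Set.ncard_coe_finset, hcard] at this
  omega

theorem stmt5 {V : Type*} [Fintype V] (G : SimpleGraph V) (u v : V) (huv : G.Adj u v)
    (c : V) (r : ℕ)
    (hbefore : r ≤ {y : V | G.Reachable c y}.ncard)
    (hafter : {y : V | (G.deleteEdges {s(u, v)}).Reachable c y}.ncard < r) :
    G.dist c u ≤ r ∧ G.dist c v ≤ r := by
  refine ⟨key_lemma G u v huv c r hafter, key_lemma G v u huv.symm c r ?_⟩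
  rwa [Sym2.eq_swap]
end

section
/- Let G be a finite simple graph with an edge (u,v), and let G' be G minus the edge (u,v). Let (c_j, r_j) for j in a finite index set J be pairs of a vertex and a natural number such that the balls B_j = { x : x connected to c_j in G and dist_G(c_j, x) ≤ r_j } are pairwise disjoint and satisfy |B_j| ≥ r_j for all j. Then there is at most one index j ∈ J such that the connected component of c_j in G' has size strictly less than r_j. -/
/-!
If the component of `c` in `G - uv` has fewer than `r` vertices while the ball of radius `r`
about `c` in `G` has at least `r`, some vertex `x` of that ball is cut off from `c` by deleting
`uv`. A shortest `c`–`x` walk must then pass through `u`, so `u` lies in the ball. Disjoint balls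
cannot both contain `u`.
-/

namespace SimpleGraph

variable {V : Type*} (G : SimpleGraph V)

def closedBall (a : V) (r : ℕ) : Set V := {x | G.Reachable a x ∧ G.dist a x ≤ r}

variable {G}

theorem closedBall_mono {a : V} {r s : ℕ} (h : r ≤ s) : G.closedBall a r ⊆ G.closedBall a s :=
  fun _ ⟨hx, hd⟩ => ⟨hx, hd.trans h⟩

theorem mem_closedBall_of_not_reachable_deleteEdges {a x u v : V} (hx : G.Reachable a x)
    (hx' : ¬(G.deleteEdges {s(u, v)}).Reachable a x) : u ∈ G.closedBall a (G.dist a x) := by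
  classical
  obtain ⟨p, hp⟩ := hx.exists_walk_length_eq_dist
  have hedge : s(u, v) ∈ p.edges := by
    by_contra he
    exact hx' ⟨p.toDeleteEdges {s(u, v)} fun e he' he_eq => he (he_eq ▸ he')⟩
  have hu : u ∈ p.support := p.fst_mem_support_of_mem_edges hedge
  refine ⟨⟨p.takeUntil u hu⟩, ?_⟩
  calc G.dist a u ≤ (p.takeUntil u hu).length := dist_le _
    _ ≤ p.length := p.length_takeUntil_le_length hu
    _ = G.dist a x := hp

theorem mem_closedBall_of_ncard_reachable_deleteEdges_lt [Finite V] {a u v : V} {r : ℕ}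
    (hball : r ≤ (G.closedBall a r).ncard)
    (hsmall : {x | (G.deleteEdges {s(u, v)}).Reachable a x}.ncard < r) :
    u ∈ G.closedBall a r := by
  obtain ⟨x, ⟨hx, hdist⟩, hx'⟩ :
      ∃ x ∈ G.closedBall a r, ¬(G.deleteEdges {s(u, v)}).Reachable a x := by
    by_contra! h
    exact (Set.ncard_le_ncard h).not_gt (hsmall.trans_le hball)
  exact closedBall_mono hdist (mem_closedBall_of_not_reachable_deleteEdges hx hx')

end SimpleGraph

open SimpleGraph in
theorem stmt16_general {V J : Type*} [Fintype V] (G : SimpleGraph V)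
    (u v : V) (c : J → V) (r : J → ℕ)
    (hdisj : ∀ j j' : J, j ≠ j' →
      Disjoint {x : V | G.Reachable (c j) x ∧ G.dist (c j) x ≤ r j}
        {x : V | G.Reachable (c j') x ∧ G.dist (c j') x ≤ r j'})
    (hlarge : ∀ j : J, r j ≤ {x : V | G.Reachable (c j) x ∧ G.dist (c j) x ≤ r j}.ncard) :
    ∀ j j' : J,
      {x : V | (G.deleteEdges {s(u, v)}).Reachable (c j) x}.ncard < r j →
      {x : V | (G.deleteEdges {s(u, v)}).Reachable (c j') x}.ncard < r j' →
      j = j' := by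
  intro j j' hj hj'
  by_contra hne
  exact Set.disjoint_left.mp (hdisj j j' hne)
    (mem_closedBall_of_ncard_reachable_deleteEdges_lt (hlarge j) hj)
    (mem_closedBall_of_ncard_reachable_deleteEdges_lt (hlarge j') hj')

theorem stmt16 {V J : Type*} [Fintype V] [Finite J] (G : SimpleGraph V)
    (u v : V) (huv : G.Adj u v) (c : J → V) (r : J → ℕ)
    (hdisj : ∀ j j' : J, j ≠ j' →
      Disjoint {x : V | G.Reachable (c j) x ∧ G.dist (c j) x ≤ r j}
        {x : V | G.Reachable (c j') x ∧ G.dist (c j') x ≤ r j'})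
    (hlarge : ∀ j : J, r j ≤ {x : V | G.Reachable (c j) x ∧ G.dist (c j) x ≤ r j}.ncard) :
    ∀ j j' : J,
      {x : V | (G.deleteEdges {s(u, v)}).Reachable (c j) x}.ncard < r j →
      {x : V | (G.deleteEdges {s(u, v)}).Reachable (c j') x}.ncard < r j' →
      j = j' :=
  stmt16_general G u v c r hdisj hlarge
end

section
/- Let G be a simple graph, G₀ a subgraph of G (same vertices, a subset of edges), and I a set of vertices such that every edge of G not in G₀ has at least one endpoint in I. Let ε ≥ 0, let u, v be connected vertices of G, and suppose δ₁ is a real number with δ₁ ≥ dist_G(u,v) and with the property that if some shortest u–v path in G uses only edges of G₀ then δ₁ ≤ (1+ε)·dist_G(u,v). Define δ = min(δ₁, min_{x ∈ I, x connected to u and v in G} (dist_G(u,x) + dist_G(x,v))). Then dist_G(u,v) ≤ δ ≤ (1+ε)·dist_G(u,v). -/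
/-!
Fix a shortest `u`–`v` walk in `G`. If all its edges lie in `G₀`, it is also a shortest walk in
`G₀`, and the bound on `δ₁` applies. Otherwise it uses an edge outside `G₀`, hence passes through
some `x ∈ I`; the two pieces at `x` are shortest walks, so `dist u x + dist x v = dist u v`.
The lower bound is the triangle inequality.
-/

section DiteMinInf

variable {α β : Type*} [LinearOrder α] {S : Finset β} {f : β → α} {a c : α}

lemma le_dite_min_inf' (ha : c ≤ a) (hf : ∀ x ∈ S, c ≤ f x) :
    c ≤ if h : S.Nonempty then min a (S.inf' h f) else a := by
  split_ifs with h
  · exact le_min ha (Finset.le_inf' h f hf)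
  · exact ha

lemma dite_min_inf'_le_of_le (ha : a ≤ c) :
    (if h : S.Nonempty then min a (S.inf' h f) else a) ≤ c := by
  split_ifs
  · exact (min_le_left _ _).trans ha
  · exact ha

lemma dite_min_inf'_le_of_mem {x : β} (hx : x ∈ S) (hfx : f x ≤ c) :
    (if h : S.Nonempty then min a (S.inf' h f) else a) ≤ c := by
  rw [dif_pos ⟨x, hx⟩]
  exact (min_le_right _ _).trans ((Finset.inf'_le f hx).trans hfx)

end DiteMinInf

namespace SimpleGraph.Walk

variable {V : Type*} {G H : SimpleGraph V} {u v w : V}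

lemma dist_add_dist_eq_of_mem_support {p : G.Walk u v} (hp : p.length = G.dist u v)
    (hw : w ∈ p.support) : G.dist u w + G.dist w v = G.dist u v := by
  classical
  rw [← length_eq_dist_of_subwalk hp (p.isSubwalk_takeUntil hw),
    ← length_eq_dist_of_subwalk hp (p.isSubwalk_dropUntil hw), ← length_append,
    p.take_spec hw, hp]

lemma dist_eq_dist_of_le_of_edges_subset (hHG : H ≤ G) {p : G.Walk u v}
    (hp : p.length = G.dist u v) (hpH : ∀ e ∈ p.edges, e ∈ H.edgeSet) :
    H.dist u v = G.dist u v := by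
  refine le_antisymm ?_ (Reachable.dist_anti hHG ⟨p.transfer H hpH⟩)
  simpa only [length_transfer, hp] using H.dist_le (p.transfer H hpH)

lemma edges_subset_or_exists_mem_support {I : Set V}
    (hI : ∀ x y, G.Adj x y → ¬ H.Adj x y → x ∈ I ∨ y ∈ I) (p : G.Walk u v) :
    (∀ e ∈ p.edges, e ∈ H.edgeSet) ∨ ∃ w ∈ p.support, w ∈ I := by
  refine or_iff_not_imp_left.2 fun hpH => ?_
  obtain ⟨e, he, heH⟩ := not_forall₂.1 hpH
  induction e using Sym2.ind with
  | h x y =>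
    rcases hI x y (p.edges_subset_edgeSet he) heH with hx | hy
    · exact ⟨x, p.fst_mem_support_of_mem_edges he, hx⟩
    · exact ⟨y, p.snd_mem_support_of_mem_edges he, hy⟩

end SimpleGraph.Walk

theorem stmt18 {V : Type*} (G G₀ : SimpleGraph V) (hsub : G₀ ≤ G)
    (I : Finset V)
    (hI : ∀ x y : V, G.Adj x y → ¬ G₀.Adj x y → x ∈ I ∨ y ∈ I)
    (ε : ℝ) (hε : 0 ≤ ε) (u v : V) (huv : G.Reachable u v)
    (δ₁ : ℝ) (h1 : (G.dist u v : ℝ) ≤ δ₁)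
    (h2 : G₀.Reachable u v → G₀.dist u v = G.dist u v →
      δ₁ ≤ (1 + ε) * (G.dist u v : ℝ))
    (S : Finset V)
    (hS : ∀ x : V, x ∈ S ↔ x ∈ I ∧ G.Reachable u x ∧ G.Reachable x v)
    (δ : ℝ)
    (hδ : δ = if h : S.Nonempty then
        min δ₁ (S.inf' h fun x => ((G.dist u x + G.dist x v : ℕ) : ℝ))
      else δ₁) :
    (G.dist u v : ℝ) ≤ δ ∧ δ ≤ (1 + ε) * (G.dist u v : ℝ) := by
  classical
  obtain ⟨p, hp⟩ := huv.exists_walk_length_eq_dist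
  have hd : (G.dist u v : ℝ) ≤ (1 + ε) * G.dist u v :=
    le_mul_of_one_le_left (Nat.cast_nonneg _) (by linarith)
  subst hδ
  constructor
  · refine le_dite_min_inf' h1 fun x hx => ?_
    exact_mod_cast ((hS x).1 hx).2.1.dist_triangle_left v
  · rcases p.edges_subset_or_exists_mem_support (I := I) hI with hG₀ | ⟨w, hwp, hwI⟩
    · exact dite_min_inf'_le_of_le
        (h2 ⟨p.transfer G₀ hG₀⟩ (p.dist_eq_dist_of_le_of_edges_subset hsub hp hG₀))
    · have hwS : w ∈ S := (hS w).2 ⟨hwI, ⟨p.takeUntil w hwp⟩, ⟨p.dropUntil w hwp⟩⟩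
      refine dite_min_inf'_le_of_mem hwS (le_trans ?_ hd)
      exact_mod_cast (p.dist_add_dist_eq_of_mem_support hp hwp).le
end
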